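/- Let m, n ∈ ℤ³ \ {0} and a, b ∈ ℝ³ with ⟨a, m⟩ = 0 and ⟨b, n⟩ = 0. Then the field x ↦ cos⟨m−n, x⟩ · P_{m−n}(⟨a,n⟩b − ⟨b,m⟩a) equals B(a·cos⟨m,·⟩ + b·sin⟨n,·⟩) + B(−b·cos⟨n,·⟩ + a·sin⟨m,·⟩). -/

import Mathlib

open MeasureTheory Set

noncomputable section

/-- Vector fields on `ℝ³`, with `ℝ³ = Fin 3 → ℝ`. -/
abbrev V3 := Fin 3 → ℝ

/-- The Euclidean inner product on `ℝ³`. -/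
def dot3 (a b : V3) : ℝ := ∑ i, a i * b i

/-- Embedding of `ℤ³` into `ℝ³`. -/
def toR (m : Fin 3 → ℤ) : V3 := fun i => (m i : ℝ)

/-- `2π`-periodic vector field. -/
def PerField (v : V3 → V3) : Prop :=
  ∀ (x : V3) (k : Fin 3 → ℤ), v (x + (2 * Real.pi) • toR k) = v x

/-- `2π`-periodic scalar function. -/
def PerFun (p : V3 → ℝ) : Prop :=
  ∀ (x : V3) (k : Fin 3 → ℤ), p (x + (2 * Real.pi) • toR k) = p x

/-- The fundamental cell `[0,2π]³`. -/
def Box3 : Set V3 := Set.univ.pi fun _ => Icc (0 : ℝ) (2 * Real.pi)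

/-- Divergence-free vector field. -/
def DivFree3 (v : V3 → V3) : Prop :=
  ∀ x, (∑ i, fderiv ℝ v x (Pi.single i 1) i) = 0

/-- Zero mean over the fundamental cell. -/
def ZeroMean3 (v : V3 → V3) : Prop := (∫ x in Box3, v x) = 0

/-- Smooth periodic divergence-free zero-mean vector field. -/
def GoodField (v : V3 → V3) : Prop :=
  ContDiff ℝ (⊤ : ℕ∞) v ∧ PerField v ∧ DivFree3 v ∧ ZeroMean3 v

/-- The gradient of a scalar function. -/
def grad3 (p : V3 → ℝ) (x : V3) : V3 := fun i => fderiv ℝ p x (Pi.single i 1)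

/-- The convective term `⟨u,∇⟩u`, i.e. `x ↦ (Du)(x) (u x)`. -/
def convTerm (u : V3 → V3) (x : V3) : V3 := fderiv ℝ u x (u x)

/-- `w` is the Leray projection `B(u)` of the convective term `⟨u,∇⟩u`: it is a smooth
periodic divergence-free zero-mean field with `⟨u,∇⟩u − w = ∇p` for some smooth
periodic `p`. -/
def IsLeray (u w : V3 → V3) : Prop :=
  GoodField w ∧ ∃ p : V3 → ℝ, ContDiff ℝ (⊤ : ℕ∞) p ∧ PerFun p ∧
    ∀ x, convTerm u x - w x = grad3 p x

/-- The map `B` (defined by choice; for smooth periodic divergence-free zero-mean `u`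
the Leray projection exists and is unique, and `Bop u` is it). -/
def Bop (u : V3 → V3) : V3 → V3 :=
  haveI := Classical.propDecidable (∃ w, IsLeray u w)
  if h : ∃ w, IsLeray u w then h.choose else 0

/-- Orthogonal projection of `ℝ³` onto `ℓ^⊥` (and `0` for `ℓ = 0`). -/
def proj3 (ℓ : V3) (v : V3) : V3 :=
  if ℓ = 0 then 0 else v - (dot3 v ℓ / dot3 ℓ ℓ) • ℓ

/-- The space `E(K)` of trigonometric divergence-free fields with frequencies in `K`:
finite sums `x ↦ Σ_{ℓ} (a_ℓ cos⟨ℓ,x⟩ + b_ℓ sin⟨ℓ,x⟩)` with `ℓ ∈ K`, `a_ℓ, b_ℓ ⊥ ℓ`. -/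
def EK (K : Set (Fin 3 → ℤ)) : Set (V3 → V3) :=
  {v | ∃ (S : Finset (Fin 3 → ℤ)) (a b : (Fin 3 → ℤ) → V3),
    ↑S ⊆ K ∧
    (∀ ℓ ∈ S, dot3 (a ℓ) (toR ℓ) = 0 ∧ dot3 (b ℓ) (toR ℓ) = 0) ∧
    v = fun x => ∑ ℓ ∈ S,
      (Real.cos (dot3 (toR ℓ) x) • a ℓ + Real.sin (dot3 (toR ℓ) x) • b ℓ)}

/-- The set of fields of the form `η − Σᵢ B(ζⁱ)` with `η, ζⁱ ∈ E`. -/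
def Sform (E : Set (V3 → V3)) : Set (V3 → V3) :=
  {η₁ | ∃ (p : ℕ) (η : V3 → V3) (ζ : Fin p → V3 → V3),
    η ∈ E ∧ (∀ i, ζ i ∈ E) ∧ η₁ = η - ∑ i, Bop (ζ i)}

/-- `F(E)`: the largest vector space all of whose elements can be written
`η − Σᵢ B(ζⁱ)` with `η, ζⁱ ∈ E`. -/
def Fop (E : Set (V3 → V3)) : Set (V3 → V3) :=
  {x | ∃ F : Submodule ℝ (V3 → V3), (F : Set (V3 → V3)) ⊆ Sform E ∧ x ∈ F}

/-- The spaces `E₀(K) = E(K)`, `E_j(K) = F(E_{j−1}(K))`. -/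
def Ej (K : Set (Fin 3 → ℤ)) : ℕ → Set (V3 → V3)
  | 0 => EK K
  | j + 1 => Fop (Ej K j)

/-- `E_∞(K) = ⋃_{j≥1} E_j(K)`. -/
def Einf (K : Set (Fin 3 → ℤ)) : Set (V3 → V3) := ⋃ j : ℕ, Ej K (j + 1)

/-- Two integer vectors are non-parallel if neither is a real multiple of the other. -/
def NonParallel (m n : Fin 3 → ℤ) : Prop :=
  (¬ ∃ c : ℝ, toR m = c • toR n) ∧ (¬ ∃ c : ℝ, toR n = c • toR m)

section Helpers

lemma dot3_comm' (a b : V3) : dot3 a b = dot3 b a :=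
  Finset.sum_congr rfl fun i _ => mul_comm _ _

lemma dot3_add_right (l x y : V3) : dot3 l (x + y) = dot3 l x + dot3 l y := by
  simp [dot3, mul_add, Finset.sum_add_distrib]

lemma dot3_smul_right (l : V3) (c : ℝ) (x : V3) : dot3 l (c • x) = c * dot3 l x := by
  simp only [dot3, Finset.mul_sum, Pi.smul_apply, smul_eq_mul]
  exact Finset.sum_congr rfl fun i _ => by ring

lemma dot3_neg_right (l x : V3) : dot3 l (-x) = -dot3 l x := by
  simp [dot3, mul_neg, Finset.sum_neg_distrib]

lemma dot3_sub_left (x y l : V3) : dot3 (x - y) l = dot3 x l - dot3 y l := by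
  simp [dot3, sub_mul, Finset.sum_sub_distrib]

lemma dot3_add_left (x y l : V3) : dot3 (x + y) l = dot3 x l + dot3 y l := by
  simp [dot3, add_mul, Finset.sum_add_distrib]

lemma dot3_smul_left (c : ℝ) (x l : V3) : dot3 (c • x) l = c * dot3 x l := by
  simp only [dot3, Finset.mul_sum, Pi.smul_apply, smul_eq_mul]
  exact Finset.sum_congr rfl fun i _ => by ring

lemma toR_sub (m n : Fin 3 → ℤ) : toR (m - n) = toR m - toR n := by
  funext i; simp [toR]

lemma toR_add (m n : Fin 3 → ℤ) : toR (m + n) = toR m + toR n := by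
  funext i; simp [toR]

lemma toR_neg (m : Fin 3 → ℤ) : toR (-m) = -toR m := by
  funext i; simp [toR]

lemma toR_eq_zero {l : Fin 3 → ℤ} : toR l = 0 ↔ l = 0 := by
  constructor
  · intro h; funext i
    have := congrFun h i
    simpa [toR] using this
  · rintro rfl; funext i; simp [toR]

/-- `dot3 l` as a continuous linear map. -/
def dotL (l : V3) : V3 →L[ℝ] ℝ := ∑ i, l i • (ContinuousLinearMap.proj i : V3 →L[ℝ] ℝ)

lemma dotL_apply (l x : V3) : dotL l x = dot3 l x := by
  simp [dotL, dot3]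

lemma dot3_single (l : V3) (i : Fin 3) : dot3 l (Pi.single i 1) = l i := by
  simp [dot3, Pi.single_apply]

lemma hasFDerivAt_dot (l x : V3) : HasFDerivAt (fun y => dot3 l y) (dotL l) x := by
  have h : (fun y : V3 => dot3 l y) = ⇑(dotL l) := funext fun y => (dotL_apply l y).symm
  rw [h]; exact (dotL l).hasFDerivAt

lemma contDiff_dotf (l : V3) : ContDiff ℝ (⊤ : ℕ∞) (fun y : V3 => dot3 l y) := by
  have h : (fun y : V3 => dot3 l y) = ⇑(dotL l) := funext fun y => (dotL_apply l y).symm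
  rw [h]; exact (dotL l).contDiff

lemma hasFDerivAt_cosMode (l v x : V3) :
    HasFDerivAt (fun y => Real.cos (dot3 l y) • v)
      (((-Real.sin (dot3 l x)) • dotL l).smulRight v) x := by
  have h2 : HasFDerivAt (fun y => Real.cos (dot3 l y)) (-(Real.sin (dot3 l x) • dotL l)) x := by
    have := (Real.hasDerivAt_cos (dot3 l x)).comp_hasFDerivAt x (hasFDerivAt_dot l x)
    simpa [Function.comp_def] using this
  have h3 : ((-Real.sin (dot3 l x)) • dotL l) = (-(Real.sin (dot3 l x) • dotL l)) := by
    ext w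
    simp
  rw [h3]
  exact h2.smul_const v

lemma hasFDerivAt_sinMode (l v x : V3) :
    HasFDerivAt (fun y => Real.sin (dot3 l y) • v)
      (((Real.cos (dot3 l x)) • dotL l).smulRight v) x := by
  have h1 : HasFDerivAt (fun y => Real.sin (dot3 l y)) ((Real.cos (dot3 l x)) • dotL l) x := by
    have := (Real.hasDerivAt_sin (dot3 l x)).comp_hasFDerivAt x (hasFDerivAt_dot l x)
    simpa [Function.comp_def, neg_smul] using this
  exact h1.smul_const v

lemma hasFDerivAt_sinMul (l : V3) (r : ℝ) (x : V3) :
    HasFDerivAt (fun y => Real.sin (dot3 l y) * r)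
      ((Real.cos (dot3 l x) * r) • dotL l) x := by
  have h1 : HasFDerivAt (fun y => Real.sin (dot3 l y)) ((Real.cos (dot3 l x)) • dotL l) x := by
    have := (Real.hasDerivAt_sin (dot3 l x)).comp_hasFDerivAt x (hasFDerivAt_dot l x)
    simpa [Function.comp_def, neg_smul] using this
  have h2 := h1.mul_const r
  have h3 : r • (Real.cos (dot3 l x) • dotL l) = (Real.cos (dot3 l x) * r) • dotL l := by
    rw [smul_smul, mul_comm]
  rwa [h3] at h2

lemma contDiff_cosMode (l v : V3) :
    ContDiff ℝ (⊤ : ℕ∞) (fun y => Real.cos (dot3 l y) • v) :=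
  (Real.contDiff_cos.comp (contDiff_dotf l)).smul contDiff_const

lemma dot3_self_ne_zero {l : V3} (hl : l ≠ 0) : dot3 l l ≠ 0 := by
  intro h
  apply hl; funext i
  have hnn : ∀ j ∈ Finset.univ, (0:ℝ) ≤ l j * l j := fun j _ => mul_self_nonneg _
  have := (Finset.sum_eq_zero_iff_of_nonneg hnn).mp h i (Finset.mem_univ i)
  simpa [mul_self_eq_zero] using this

lemma proj3_zero_left (c : V3) : proj3 0 c = 0 := by simp [proj3]

lemma dot3_proj3 (l c : V3) : dot3 (proj3 l c) l = 0 := by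
  unfold proj3
  by_cases hl : l = 0
  · simp [hl, dot3]
  · rw [if_neg hl, dot3_sub_left, dot3_smul_left, div_mul_cancel₀ _ (dot3_self_ne_zero hl),
      sub_self]

lemma sub_proj3 (l c : V3) (h : l = 0 → c = 0) :
    c - proj3 l c = (dot3 c l / dot3 l l) • l := by
  unfold proj3
  by_cases hl : l = 0
  · simp [hl, h hl]
  · rw [if_neg hl, sub_sub_cancel]

lemma proj3_smul (l : V3) (r : ℝ) (c : V3) : proj3 l (r • c) = r • proj3 l c := by
  unfold proj3
  by_cases hl : l = 0
  · simp [hl]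
  · rw [if_neg hl, if_neg hl, dot3_smul_left, smul_sub, smul_smul, mul_div_assoc]

lemma proj3_neg (l c : V3) : proj3 l (-c) = -proj3 l c := by
  have := proj3_smul l (-1) c
  simpa using this

lemma dot3_shift (l k : Fin 3 → ℤ) (x : V3) :
    dot3 (toR l) (x + (2 * Real.pi) • toR k)
      = dot3 (toR l) x + ((∑ i, l i * k i : ℤ) : ℝ) * (2 * Real.pi) := by
  rw [dot3_add_right, dot3_smul_right]
  congr 1
  rw [mul_comm]
  congr 1
  simp only [dot3, toR]
  push_cast
  ring

lemma measurableSet_Box3 : MeasurableSet Box3 :=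
  MeasurableSet.univ_pi fun _ => measurableSet_Icc

lemma isCompact_Box3 : IsCompact Box3 := isCompact_univ_pi fun _ => isCompact_Icc

lemma integral_Icc_cexp (c : ℤ) (hc : c ≠ 0) :
    ∫ t in Set.Icc (0:ℝ) (2*Real.pi), Complex.exp ((c:ℂ) * t * Complex.I) = 0 := by
  have h2 : (0:ℝ) ≤ 2 * Real.pi := by positivity
  have hc' : (c:ℂ) * Complex.I ≠ 0 := by
    simp [Complex.I_ne_zero, hc]
  have hfun : ∀ t : ℝ, (c:ℂ) * (t:ℂ) * Complex.I = ((c:ℂ) * Complex.I) * (t:ℂ) := fun t => by ring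
  simp_rw [hfun]
  rw [MeasureTheory.integral_Icc_eq_integral_Ioc, ← intervalIntegral.integral_of_le h2]
  rw [integral_exp_mul_complex hc']
  have h3 : ((c:ℂ) * Complex.I) * ((2*Real.pi : ℝ):ℂ) = (c:ℂ) * (2 * (Real.pi:ℂ) * Complex.I) := by
    push_cast; ring
  rw [h3, Complex.exp_int_mul_two_pi_mul_I]
  simp

lemma integral_box_cos (l : Fin 3 → ℤ) (hl : l ≠ 0) :
    (∫ x in Box3, Real.cos (dot3 (toR l) x)) = 0 := by
  have hcont : Continuous (fun x : V3 => Complex.exp (((dot3 (toR l) x : ℝ):ℂ) * Complex.I)) := by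
    exact Complex.continuous_exp.comp
      ((Complex.continuous_ofReal.comp (contDiff_dotf (toR l)).continuous).mul continuous_const)
  have hint : MeasureTheory.IntegrableOn
      (fun x : V3 => Complex.exp (((dot3 (toR l) x : ℝ):ℂ) * Complex.I)) Box3 :=
    hcont.continuousOn.integrableOn_compact isCompact_Box3
  have hcexp : (∫ x in Box3, Complex.exp (((dot3 (toR l) x : ℝ):ℂ) * Complex.I)) = 0 := by
    obtain ⟨j, hj⟩ : ∃ j, l j ≠ 0 := by
      by_contra h; push_neg at h; exact hl (funext fun i => h i)
    set g : Fin 3 → ℝ → ℂ :=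
      fun i => (Set.Icc (0:ℝ) (2*Real.pi)).indicator
        (fun t => Complex.exp ((l i : ℂ) * t * Complex.I)) with hg
    have key : ∀ x : V3, (∏ i, g i (x i))
        = Box3.indicator (fun x => Complex.exp (((dot3 (toR l) x : ℝ):ℂ) * Complex.I)) x := by
      intro x
      by_cases hx : x ∈ Box3
      · have hxi : ∀ i, x i ∈ Set.Icc (0:ℝ) (2*Real.pi) := fun i => hx i (Set.mem_univ i)
        rw [Set.indicator_of_mem hx,
          Finset.prod_congr rfl (fun i _ => Set.indicator_of_mem (hxi i) _), ← Complex.exp_sum]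
        congr 1
        simp only [dot3, toR]
        push_cast
        rw [Finset.sum_mul]
      · obtain ⟨i0, hi0⟩ : ∃ i, x i ∉ Set.Icc (0:ℝ) (2*Real.pi) := by
          by_contra h; push_neg at h; exact hx fun i _ => h i
        rw [Set.indicator_of_notMem hx]
        exact Finset.prod_eq_zero (Finset.mem_univ i0) (Set.indicator_of_notMem hi0 _)
    have h1 : (∫ x : V3, ∏ i, g i (x i)) = ∏ i, ∫ t : ℝ, g i t :=
      MeasureTheory.integral_fintype_prod_eq_prod g
    have h2 : (∫ x : V3, ∏ i, g i (x i))
        = ∫ x in Box3, Complex.exp (((dot3 (toR l) x : ℝ):ℂ) * Complex.I) := by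
      rw [← MeasureTheory.integral_indicator measurableSet_Box3]
      exact MeasureTheory.integral_congr_ae (Filter.Eventually.of_forall key)
    have hzero : (∫ t : ℝ, g j t) = 0 := by
      rw [hg]
      simp only
      rw [MeasureTheory.integral_indicator measurableSet_Icc]
      exact integral_Icc_cexp (l j) hj
    rw [← h2, h1]
    exact Finset.prod_eq_zero (Finset.mem_univ j) hzero
  have hre : ∀ x : V3, Real.cos (dot3 (toR l) x)
      = (Complex.exp (((dot3 (toR l) x : ℝ):ℂ) * Complex.I)).re :=
    fun x => (Complex.exp_ofReal_mul_I_re _).symm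
  calc (∫ x in Box3, Real.cos (dot3 (toR l) x))
      = ∫ x in Box3, Complex.reCLM (Complex.exp (((dot3 (toR l) x : ℝ):ℂ) * Complex.I)) := by
        exact MeasureTheory.integral_congr_ae (Filter.Eventually.of_forall fun x => hre x)
    _ = Complex.reCLM (∫ x in Box3, Complex.exp (((dot3 (toR l) x : ℝ):ℂ) * Complex.I)) :=
        (Complex.reCLM.integral_comp_comm hint)
    _ = 0 := by rw [hcexp]; simp

end Helpers

section Main

lemma sum_mul_dot (s : ℝ) (L v : V3) : (∑ i, s * L i * v i) = s * dot3 L v := by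
  rw [dot3, Finset.mul_sum]
  exact Finset.sum_congr rfl fun i _ => by ring

lemma goodField_two_modes (l1 l2 : Fin 3 → ℤ) (v1 v2 : V3)
    (hv1 : dot3 v1 (toR l1) = 0) (hv2 : dot3 v2 (toR l2) = 0)
    (h01 : toR l1 = 0 → v1 = 0) (h02 : toR l2 = 0 → v2 = 0) :
    GoodField (fun x => Real.cos (dot3 (toR l1) x) • v1 + Real.cos (dot3 (toR l2) x) • v2) := by
  refine ⟨(contDiff_cosMode _ v1).add (contDiff_cosMode _ v2), ?_, ?_, ?_⟩
  · intro x k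
    simp only [dot3_shift, Real.cos_add_int_mul_two_pi]
  · intro x
    have hD := (hasFDerivAt_cosMode (toR l1) v1 x).add (hasFDerivAt_cosMode (toR l2) v2 x)
    erw [hD.fderiv]
    simp only [ContinuousLinearMap.add_apply, ContinuousLinearMap.smulRight_apply,
      ContinuousLinearMap.smul_apply, dotL_apply, dot3_single, Pi.add_apply, Pi.smul_apply,
      smul_eq_mul]
    rw [Finset.sum_add_distrib, sum_mul_dot, sum_mul_dot, dot3_comm' (toR l1) v1,
      dot3_comm' (toR l2) v2, hv1, hv2]
    ring
  · unfold ZeroMean3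
    have i1 : MeasureTheory.IntegrableOn (fun x => Real.cos (dot3 (toR l1) x) • v1) Box3 :=
      (contDiff_cosMode (toR l1) v1).continuous.continuousOn.integrableOn_compact isCompact_Box3
    have i2 : MeasureTheory.IntegrableOn (fun x => Real.cos (dot3 (toR l2) x) • v2) Box3 :=
      (contDiff_cosMode (toR l2) v2).continuous.continuousOn.integrableOn_compact isCompact_Box3
    rw [MeasureTheory.integral_add i1 i2]
    have key : ∀ (l : Fin 3 → ℤ) (v : V3), (toR l = 0 → v = 0) →
        (∫ x in Box3, Real.cos (dot3 (toR l) x) • v) = 0 := by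
      intro l v h0
      by_cases hl : l = 0
      · rw [h0 (by rw [hl]; funext i; simp [toR])]
        simp
      · rw [integral_smul_const, integral_box_cos l hl, zero_smul]
    rw [key l1 v1 h01, key l2 v2 h02, add_zero]

lemma convTerm_mode (L M a b : V3) (x : V3) :
    convTerm (fun y => Real.cos (dot3 L y) • a + Real.sin (dot3 M y) • b) x =
      (-Real.sin (dot3 L x) *
        (Real.cos (dot3 L x) * dot3 L a + Real.sin (dot3 M x) * dot3 L b)) • a
      + (Real.cos (dot3 M x) *
        (Real.cos (dot3 L x) * dot3 M a + Real.sin (dot3 M x) * dot3 M b)) • b := by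
  have hD := (hasFDerivAt_cosMode L a x).add (hasFDerivAt_sinMode M b x)
  unfold convTerm
  erw [hD.fderiv]
  simp only [ContinuousLinearMap.add_apply, ContinuousLinearMap.smulRight_apply,
    ContinuousLinearMap.smul_apply, dotL_apply, dot3_add_right, dot3_smul_right, smul_eq_mul]

lemma isLeray_two_modes (u : V3 → V3) (l1 l2 : Fin 3 → ℤ) (c1 c2 : V3)
    (h1 : toR l1 = 0 → c1 = 0) (h2 : toR l2 = 0 → c2 = 0)
    (hu : ∀ x, convTerm u x
      = Real.cos (dot3 (toR l1) x) • c1 + Real.cos (dot3 (toR l2) x) • c2) :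
    IsLeray u (fun x => Real.cos (dot3 (toR l1) x) • proj3 (toR l1) c1
      + Real.cos (dot3 (toR l2) x) • proj3 (toR l2) c2) := by
  constructor
  · exact goodField_two_modes l1 l2 _ _ (dot3_proj3 _ _) (dot3_proj3 _ _)
      (fun h => by rw [h, proj3_zero_left]) (fun h => by rw [h, proj3_zero_left])
  · set r1 : ℝ := dot3 c1 (toR l1) / dot3 (toR l1) (toR l1) with hr1
    set r2 : ℝ := dot3 c2 (toR l2) / dot3 (toR l2) (toR l2) with hr2
    refine ⟨fun x => Real.sin (dot3 (toR l1) x) * r1 + Real.sin (dot3 (toR l2) x) * r2,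
      ?_, ?_, ?_⟩
    · exact ((Real.contDiff_sin.comp (contDiff_dotf _)).mul contDiff_const).add
        ((Real.contDiff_sin.comp (contDiff_dotf _)).mul contDiff_const)
    · intro x k
      simp only [dot3_shift, Real.sin_add_int_mul_two_pi]
    · intro x
      have hD := (hasFDerivAt_sinMul (toR l1) r1 x).add (hasFDerivAt_sinMul (toR l2) r2 x)
      have hgrad : grad3 (fun x => Real.sin (dot3 (toR l1) x) * r1
          + Real.sin (dot3 (toR l2) x) * r2) x
          = fun i => Real.cos (dot3 (toR l1) x) * r1 * (toR l1) i
            + Real.cos (dot3 (toR l2) x) * r2 * (toR l2) i := by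
        funext i
        unfold grad3
        erw [hD.fderiv]
        simp only [ContinuousLinearMap.add_apply, ContinuousLinearMap.smul_apply,
          dotL_apply, dot3_single, smul_eq_mul]
      rw [hu x, hgrad]
      have e1 : c1 - proj3 (toR l1) c1 = r1 • toR l1 := sub_proj3 _ _ h1
      have e2 : c2 - proj3 (toR l2) c2 = r2 • toR l2 := sub_proj3 _ _ h2
      funext i
      have e1i := congrFun e1 i
      have e2i := congrFun e2 i
      simp only [Pi.sub_apply, Pi.smul_apply, smul_eq_mul] at e1i e2i
      simp only [Pi.sub_apply, Pi.add_apply, Pi.smul_apply, smul_eq_mul]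
      rw [show Real.cos (dot3 (toR l1) x) * c1 i + Real.cos (dot3 (toR l2) x) * c2 i
          - (Real.cos (dot3 (toR l1) x) * proj3 (toR l1) c1 i
            + Real.cos (dot3 (toR l2) x) * proj3 (toR l2) c2 i)
          = Real.cos (dot3 (toR l1) x) * (c1 i - proj3 (toR l1) c1 i)
            + Real.cos (dot3 (toR l2) x) * (c2 i - proj3 (toR l2) c2 i) from by ring,
        e1i, e2i]
      ring

lemma convTerm_u1 (m n : Fin 3 → ℤ) (a b : V3)
    (ha : dot3 a (toR m) = 0) (hb : dot3 b (toR n) = 0) (x : V3) :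
    convTerm (fun y => Real.cos (dot3 (toR m) y) • a + Real.sin (dot3 (toR n) y) • b) x =
      Real.cos (dot3 (toR (m - n)) x) • ((2⁻¹ : ℝ) • (dot3 a (toR n) • b - dot3 b (toR m) • a))
      + Real.cos (dot3 (toR (m + n)) x) •
          ((2⁻¹ : ℝ) • (dot3 a (toR n) • b + dot3 b (toR m) • a)) := by
  rw [convTerm_mode]
  rw [toR_sub, toR_add, dot3_sub_left, dot3_add_left, Real.cos_sub, Real.cos_add]
  rw [dot3_comm' (toR m) a, ha, dot3_comm' (toR n) b, hb,
    dot3_comm' (toR m) b, dot3_comm' (toR n) a]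
  funext i
  simp only [Pi.add_apply, Pi.smul_apply, Pi.sub_apply, smul_eq_mul]
  ring

lemma convTerm_u2 (m n : Fin 3 → ℤ) (a b : V3)
    (ha : dot3 a (toR m) = 0) (hb : dot3 b (toR n) = 0) (x : V3) :
    convTerm (fun y => Real.cos (dot3 (toR n) y) • (-b) + Real.sin (dot3 (toR m) y) • a) x =
      Real.cos (dot3 (toR (m - n)) x) • ((2⁻¹ : ℝ) • (dot3 a (toR n) • b - dot3 b (toR m) • a))
      + Real.cos (dot3 (toR (m + n)) x) •
          (-((2⁻¹ : ℝ) • (dot3 a (toR n) • b + dot3 b (toR m) • a))) := by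
  rw [convTerm_mode]
  rw [toR_sub, toR_add, dot3_sub_left, dot3_add_left, Real.cos_sub, Real.cos_add]
  rw [dot3_neg_right, dot3_neg_right, dot3_comm' (toR n) b, hb,
    dot3_comm' (toR m) a, ha, dot3_comm' (toR m) b, dot3_comm' (toR n) a]
  funext i
  simp only [Pi.add_apply, Pi.smul_apply, Pi.sub_apply, Pi.neg_apply, smul_eq_mul,
    neg_zero, mul_neg, neg_mul, neg_neg]
  ring

end Main

/-- `cos⟨m−n,·⟩ P_{m−n}(⟨a,n⟩b − ⟨b,m⟩a)
= B(a cos⟨m,·⟩ + b sin⟨n,·⟩) + B(−b cos⟨n,·⟩ + a sin⟨m,·⟩)`. -/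
theorem cos_sub_eq_sum_B (m n : Fin 3 → ℤ) (hm : m ≠ 0) (hn : n ≠ 0) (a b : V3)
    (ha : dot3 a (toR m) = 0) (hb : dot3 b (toR n) = 0) :
    ∃ w₁ w₂ : V3 → V3,
      IsLeray (fun x => Real.cos (dot3 (toR m) x) • a + Real.sin (dot3 (toR n) x) • b) w₁ ∧
      IsLeray (fun x => Real.cos (dot3 (toR n) x) • (-b) + Real.sin (dot3 (toR m) x) • a) w₂ ∧
      ∀ x, w₁ x + w₂ x =
        Real.cos (dot3 (toR (m - n)) x) •
          proj3 (toR (m - n)) (dot3 a (toR n) • b - dot3 b (toR m) • a) := by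
  have hc0 : toR (m - n) = 0 →
      (2⁻¹ : ℝ) • (dot3 a (toR n) • b - dot3 b (toR m) • a) = 0 := by
    intro h
    have hmn : m = n := sub_eq_zero.mp (toR_eq_zero.mp h)
    rw [hmn] at ha
    rw [← hmn] at hb
    rw [ha, hb]
    simp
  have hd0 : toR (m + n) = 0 →
      (2⁻¹ : ℝ) • (dot3 a (toR n) • b + dot3 b (toR m) • a) = 0 := by
    intro h
    have hmn : m = -n := eq_neg_of_add_eq_zero_left (toR_eq_zero.mp h)
    rw [hmn, toR_neg, dot3_neg_right, neg_eq_zero] at ha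
    have hbm : dot3 b (toR m) = 0 := by
      rw [hmn, toR_neg, dot3_neg_right, hb, neg_zero]
    rw [ha, hbm]
    simp
  refine ⟨_, _,
    isLeray_two_modes _ (m - n) (m + n)
      ((2⁻¹ : ℝ) • (dot3 a (toR n) • b - dot3 b (toR m) • a))
      ((2⁻¹ : ℝ) • (dot3 a (toR n) • b + dot3 b (toR m) • a))
      hc0 hd0 (convTerm_u1 m n a b ha hb),
    isLeray_two_modes _ (m - n) (m + n)
      ((2⁻¹ : ℝ) • (dot3 a (toR n) • b - dot3 b (toR m) • a))
      (-((2⁻¹ : ℝ) • (dot3 a (toR n) • b + dot3 b (toR m) • a)))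
      hc0 (fun h => by rw [hd0 h, neg_zero]) (convTerm_u2 m n a b ha hb), ?_⟩
  intro x
  rw [proj3_neg, proj3_smul, proj3_smul]
  funext i
  simp only [Pi.add_apply, Pi.smul_apply, Pi.neg_apply, smul_eq_mul]
  ring
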